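/- On the elliptic curve E : y^2 - 22029701·xy + 72328851024410157777600·y = x^3 over Q, the point P = (1945448965660200, 72328851024410157777600) has order exactly 6, and 2P = (0,0) (which therefore has order exactly 3). -/

import Mathlib

def E : WeierstrassCurve.Affine ℚ :=
  ⟨-22029701, 0, 72328851024410157777600, 0, 0⟩

/-!
Write `T = (0, 0)` and `Q = (-1382239969966144, -51389592136506645110272)`. The chord-tangent
formulas give `P + P = T` and `T + P = Q`, and `Q` is a `2`-torsion point because its
`y`-coordinate equals that of its negative. So `6P = 2(3P) = 2Q = 0` while `2P = T` and
`3P = Q` are nonzero, whence `P` has order `6` and `T = 2P` has order `6 / 2 = 3`.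
-/

open WeierstrassCurve.Affine

lemma addOrderOf_eq_six {G : Type*} [AddMonoid G] {a : G} (h6 : 6 • a = 0) (h2 : 2 • a ≠ 0)
    (h3 : 3 • a ≠ 0) : addOrderOf a = 6 := by
  refine addOrderOf_eq_of_nsmul_and_div_prime_nsmul (by norm_num) h6 fun p hp hdvd => ?_
  rcases (Nat.Prime.dvd_mul hp (m := 2) (n := 3)).mp hdvd with hp2 | hp3
  · rwa [(Nat.prime_dvd_prime_iff_eq hp Nat.prime_two).mp hp2]
  · rwa [(Nat.prime_dvd_prime_iff_eq hp Nat.prime_three).mp hp3]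

namespace WeierstrassCurve.Affine.Point

variable {F : Type*} [Field F] [DecidableEq F] {W : WeierstrassCurve.Affine F}

lemma some_add_some_of_addX_of_addY {x₁ y₁ x₂ y₂ x₃ y₃ : F} {h₁ : W.Nonsingular x₁ y₁}
    {h₂ : W.Nonsingular x₂ y₂} (h₃ : W.Nonsingular x₃ y₃) (hxy : ¬(x₁ = x₂ ∧ y₁ = W.negY x₂ y₂))
    (hx : W.addX x₁ x₂ (W.slope x₁ x₂ y₁ y₂) = x₃)
    (hy : W.addY x₁ x₂ y₁ (W.slope x₁ x₂ y₁ y₂) = y₃) :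
    some _ _ h₁ + some _ _ h₂ = some _ _ h₃ := by
  subst hx hy
  exact add_some hxy

end WeierstrassCurve.Affine.Point

namespace E

lemma nonsingular_P : E.Nonsingular 1945448965660200 72328851024410157777600 := by
  rw [nonsingular_iff, equation_iff]
  norm_num [E]

lemma nonsingular_T : E.Nonsingular 0 0 := by
  rw [nonsingular_iff, equation_iff]
  norm_num [E]

lemma nonsingular_Q : E.Nonsingular (-1382239969966144) (-51389592136506645110272) := by
  rw [nonsingular_iff, equation_iff]
  norm_num [E]

abbrev P : E.Point := .some _ _ nonsingular_P

abbrev T : E.Point := .some _ _ nonsingular_T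

abbrev Q : E.Point := .some _ _ nonsingular_Q

lemma P_add_P : P + P = T := by
  refine Point.some_add_some_of_addX_of_addY nonsingular_T ?_ ?_ ?_ <;>
    norm_num [WeierstrassCurve.Affine.slope, addX, addY, negAddY, negY, E]

lemma T_add_P : T + P = Q := by
  refine Point.some_add_some_of_addX_of_addY nonsingular_Q ?_ ?_ ?_ <;>
    norm_num [WeierstrassCurve.Affine.slope, addX, addY, negAddY, negY, E]

lemma Q_add_Q : Q + Q = 0 :=
  Point.add_self_of_Y_eq (by norm_num [negY, E])

lemma two_nsmul_P : 2 • P = T := by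
  rw [two_nsmul, P_add_P]

lemma three_nsmul_P : 3 • P = Q := by
  rw [succ_nsmul, two_nsmul_P, T_add_P]

lemma addOrderOf_P : addOrderOf P = 6 := by
  refine addOrderOf_eq_six ?_ (two_nsmul_P ▸ Point.some_ne_zero _)
    (three_nsmul_P ▸ Point.some_ne_zero _)
  rw [show 6 = 3 * 2 from rfl, mul_nsmul, three_nsmul_P, two_nsmul, Q_add_Q]

lemma addOrderOf_T : addOrderOf T = 3 := by
  rw [← two_nsmul_P, addOrderOf_nsmul_of_dvd two_ne_zero (addOrderOf_P ▸ by norm_num), addOrderOf_P]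

end E

/-- On the rank-9 record curve with torsion `ℤ/6ℤ`, the point
`P = (1945448965660200, 72328851024410157777600)` has order exactly 6, and `2P = (0,0)`,
which has order exactly 3. -/
theorem order_six_and_double :
    ∃ h : E.Nonsingular 1945448965660200 72328851024410157777600,
      ∃ h0 : E.Nonsingular 0 0,
        addOrderOf (WeierstrassCurve.Affine.Point.some _ _ h) = 6 ∧
        (2 : ℤ) • WeierstrassCurve.Affine.Point.some _ _ h = WeierstrassCurve.Affine.Point.some _ _ h0 ∧
        addOrderOf (WeierstrassCurve.Affine.Point.some _ _ h0) = 3 :=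
  ⟨E.nonsingular_P, E.nonsingular_T, E.addOrderOf_P, (two_zsmul _).trans E.P_add_P, E.addOrderOf_T⟩
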